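/- Let ε > 0 and δ ∈ (0,1) be such that k = (1/ε)·ln((e^ε + 2δ − 1)/((e^ε + 1)δ)) is a positive integer. Let π₀ be defined by π₀(0) = 0 and π₀(n+1) = min(e^ε·π₀(n) + δ, 1 − e^{−ε}·(1 − π₀(n) − δ), 1). Then for every n ∈ ℕ, π₀(n) = P[n + X ≥ k + 1], where X follows the k-truncated symmetric geometric distribution with success probability 1 − e^{−ε} (mass proportional to e^{−|x|ε} on x ∈ [−k,k]). -/

import Mathlib

/-! Write `E = e^ε`. The choice of `k` says exactly `δ (∑_{i ≤ k} E^i + ∑_{i < k} E^i) = 1`, so the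
`k`-TSGD puts mass `δ E^{k - |x|}` on `x` (and `δ` on `±k`). Hence `P[n + X ≥ k + 1]` is
`δ (1 + E + ⋯ + E^{n-1})` for `n ≤ k + 1`, `1 - δ (1 + E + ⋯ + E^{2k-n})` for `k ≤ n ≤ 2k + 1`, and `1`
beyond. The branch `E p + δ` of the recursion is the minimum while `(E + 1) p ≤ 1 - δ`, which holds
up to `n = k` with equality there; the branch `1 - E⁻¹ (1 - p - δ)` is the minimum from then on until
`p` reaches `1 - δ` at `n = 2k`, and afterwards the value is `1`. On each stretch the active branch
produces the next partial sum of the geometric series. -/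

open Real

/-- Mass function of the `k`-truncated symmetric geometric distribution with
success probability `1 - e^{-ε}`. -/
noncomputable def tsgdMass (ε : ℝ) (k : ℕ) (x : ℤ) : ℝ :=
  if |x| ≤ (k : ℤ) then
    ((1 - exp (-ε)) / (1 + exp (-ε) - 2 * exp (-((k : ℝ) + 1) * ε))) *
      exp (-(|x| : ℝ) * ε)
  else 0

open Finset

noncomputable def thresholdStep (E δ p : ℝ) : ℝ :=
  min (min (E * p + δ) (1 - E⁻¹ * (1 - p - δ))) 1

section thresholdStep

variable {E δ p : ℝ}

theorem thresholdStep_eq_left (hE : 1 < E) (hp : 0 ≤ p) (h : (E + 1) * p ≤ 1 - δ) :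
    thresholdStep E δ p = E * p + δ := by
  have hE0 : 0 < E := by linarith
  have h₁ : E * p + δ ≤ 1 - E⁻¹ * (1 - p - δ) := by
    rw [← sub_nonneg]
    have : 1 - E⁻¹ * (1 - p - δ) - (E * p + δ) = (E - 1) * (1 - δ - (E + 1) * p) / E := by
      field_simp; ring
    rw [this]; apply div_nonneg _ hE0.le; nlinarith
  rw [thresholdStep, min_eq_left h₁, min_eq_left (by nlinarith)]

theorem thresholdStep_eq_right (hE : 1 < E) (h₁ : 1 - δ ≤ (E + 1) * p) (h₂ : p ≤ 1 - δ) :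
    thresholdStep E δ p = 1 - E⁻¹ * (1 - p - δ) := by
  have hE0 : 0 < E := by linarith
  have h : 1 - E⁻¹ * (1 - p - δ) ≤ E * p + δ := by
    rw [← sub_nonneg]
    have : E * p + δ - (1 - E⁻¹ * (1 - p - δ)) = (E - 1) * ((E + 1) * p - (1 - δ)) / E := by
      field_simp; ring
    rw [this]; apply div_nonneg _ hE0.le; nlinarith
  have h' : 1 - E⁻¹ * (1 - p - δ) ≤ 1 := by
    have : 0 ≤ E⁻¹ * (1 - p - δ) := mul_nonneg (inv_nonneg.2 hE0.le) (by linarith)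
    linarith
  rw [thresholdStep, min_eq_right h, min_eq_left h']

theorem thresholdStep_eq_one (hE : 1 ≤ E) (hp : 0 ≤ p) (h : 1 - δ ≤ p) :
    thresholdStep E δ p = 1 := by
  have h₁ : 1 ≤ E * p + δ := by nlinarith
  have h₂ : 1 ≤ 1 - E⁻¹ * (1 - p - δ) := by
    have : E⁻¹ * (1 - p - δ) ≤ 0 :=
      mul_nonpos_of_nonneg_of_nonpos (inv_nonneg.2 (by linarith)) (by linarith)
    linarith
  exact min_eq_right (le_min h₁ h₂)

end thresholdStep

theorem mul_geom_sum_add_geom_sum_eq_one_iff {E δ : ℝ} (hE : 1 < E) (k : ℕ) :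
    δ * (∑ i ∈ range (k + 1), E ^ i + ∑ i ∈ range k, E ^ i) = 1 ↔
      δ * (E ^ (k + 1) + E ^ k - 2) = E - 1 := by
  have hE1 : E - 1 ≠ 0 := sub_ne_zero.2 hE.ne'
  rw [← mul_left_inj' hE1, one_mul, mul_assoc, add_mul, geom_sum_mul, geom_sum_mul]
  ring_nf

theorem mul_geom_sum_add_geom_sum_eq_one_of_log {ε δ : ℝ} {k : ℕ} (hε : 0 < ε) (hδ : 0 < δ)
    (hk : (k : ℝ) = (1 / ε) * Real.log ((exp ε + 2 * δ - 1) / ((exp ε + 1) * δ))) :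
    δ * (∑ i ∈ range (k + 1), exp ε ^ i + ∑ i ∈ range k, exp ε ^ i) = 1 := by
  have hE : 1 < exp ε := one_lt_exp_iff.2 hε
  have hpow : exp ε ^ k = (exp ε + 2 * δ - 1) / ((exp ε + 1) * δ) := by
    rw [← exp_nat_mul, hk, one_div, inv_mul_eq_div, div_mul_cancel₀ _ hε.ne', exp_log]
    apply div_pos <;> nlinarith
  rw [mul_geom_sum_add_geom_sum_eq_one_iff hE, pow_succ, hpow]
  field_simp
  ring

section tsgd

variable {ε δ : ℝ} {k : ℕ}

theorem tsgd_normalizer_eq (hε : 0 < ε)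
    (hnorm : δ * (∑ i ∈ range (k + 1), exp ε ^ i + ∑ i ∈ range k, exp ε ^ i) = 1) :
    (1 - exp (-ε)) / (1 + exp (-ε) - 2 * exp (-((k : ℝ) + 1) * ε)) = δ * exp ε ^ k := by
  have hE : 1 < exp ε := one_lt_exp_iff.2 hε
  have key := (mul_geom_sum_add_geom_sum_eq_one_iff hE k).1 hnorm
  have hpow : exp (-((k : ℝ) + 1) * ε) = (exp ε ^ (k + 1))⁻¹ := by
    rw [← exp_nat_mul, ← exp_neg]; push_cast; ring_nf
  have hX : exp ε ^ (k + 1) + exp ε ^ k - 2 ≠ 0 := by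
    rintro hX
    rw [hX, mul_zero] at key
    linarith
  have hden : 1 + (exp ε)⁻¹ - 2 * (exp ε ^ (k + 1))⁻¹
      = (exp ε ^ (k + 1) + exp ε ^ k - 2) / exp ε ^ (k + 1) := by
    field_simp; ring
  rw [exp_neg, hpow, hden, div_eq_iff (div_ne_zero hX (by positivity))]
  field_simp
  linear_combination (-(exp ε * exp ε ^ k)) * key

theorem tsgdMass_of_natAbs_le (hε : 0 < ε)
    (hnorm : δ * (∑ i ∈ range (k + 1), exp ε ^ i + ∑ i ∈ range k, exp ε ^ i) = 1)
    {z : ℤ} (hz : z.natAbs ≤ k) :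
    tsgdMass ε k z = δ * exp ε ^ (k - z.natAbs) := by
  have hzR : |(z : ℝ)| = z.natAbs := by rw [Nat.cast_natAbs, Int.cast_abs]
  rw [tsgdMass, if_pos (Int.abs_eq_natAbs z ▸ by exact_mod_cast hz), tsgd_normalizer_eq hε hnorm,
    hzR, neg_mul, exp_neg, exp_nat_mul, pow_sub₀ _ (exp_pos ε).ne' hz, mul_assoc]

theorem tsgdMass_of_lt_natAbs {z : ℤ} (hz : k < z.natAbs) : tsgdMass ε k z = 0 :=
  if_neg (by rw [Int.abs_eq_natAbs]; omega)

theorem tsgdMass_sub_of_le (hε : 0 < ε)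
    (hnorm : δ * (∑ i ∈ range (k + 1), exp ε ^ i + ∑ i ∈ range k, exp ε ^ i) = 1)
    {i : ℕ} (hi : i ≤ k) : tsgdMass ε k (k - i) = δ * exp ε ^ i := by
  rw [tsgdMass_of_natAbs_le hε hnorm (by omega), show ((k : ℤ) - i).natAbs = k - i by omega,
    Nat.sub_sub_self hi]

theorem tsgdMass_sub_of_ge (hε : 0 < ε)
    (hnorm : δ * (∑ i ∈ range (k + 1), exp ε ^ i + ∑ i ∈ range k, exp ε ^ i) = 1)
    {i : ℕ} (hki : k ≤ i) (hi : i ≤ 2 * k) : tsgdMass ε k (k - i) = δ * exp ε ^ (2 * k - i) := by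
  rw [tsgdMass_of_natAbs_le hε hnorm (by omega), show ((k : ℤ) - i).natAbs = i - k by omega,
    show k - (i - k) = 2 * k - i by omega]

end tsgd

noncomputable def tsgdTail (ε : ℝ) (k n : ℕ) : ℝ :=
  ∑ i ∈ range n, tsgdMass ε k (k - i)

theorem tsum_tsgdMass_eq_tsgdTail (ε : ℝ) (k n : ℕ) :
    ∑' x : {z : ℤ // (k : ℤ) + 1 ≤ (n : ℤ) + z}, tsgdMass ε k x = tsgdTail ε k n := by
  set S := {z : ℤ | (k : ℤ) + 1 ≤ (n : ℤ) + z}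
  have hinj : Set.InjOn (fun i : ℕ => (k : ℤ) - i) (range n) := fun i _ j _ h => by
    simp only at h; omega
  refine (tsum_subtype S (tsgdMass ε k)).trans ?_
  rw [tsum_eq_sum (s := (range n).image fun i : ℕ => (k : ℤ) - i),
    sum_image hinj, tsgdTail]
  · refine sum_congr rfl fun i hi => Set.indicator_of_mem ?_ _
    have := mem_range.1 hi
    show (k : ℤ) + 1 ≤ n + (k - i)
    omega
  · intro z hz
    by_cases hzS : z ∈ S
    · rw [Set.indicator_of_mem hzS]
      refine tsgdMass_of_lt_natAbs ?_
      have hzn : (k : ℤ) + 1 ≤ n + z := hzS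
      by_contra! hzk
      exact hz (mem_image.2 ⟨(k - z).toNat, mem_range.2 (by omega), by omega⟩)
    · exact Set.indicator_of_notMem hzS _

section tsgdTail

variable {ε δ : ℝ} {k : ℕ}

theorem tsgdTail_of_le (hε : 0 < ε)
    (hnorm : δ * (∑ i ∈ range (k + 1), exp ε ^ i + ∑ i ∈ range k, exp ε ^ i) = 1)
    {n : ℕ} (hn : n ≤ k + 1) : tsgdTail ε k n = δ * ∑ i ∈ range n, exp ε ^ i := by
  rw [tsgdTail, mul_sum]
  exact sum_congr rfl fun i hi => tsgdMass_sub_of_le hε hnorm (by have := mem_range.1 hi; omega)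

theorem tsgdTail_of_ge (hε : 0 < ε)
    (hnorm : δ * (∑ i ∈ range (k + 1), exp ε ^ i + ∑ i ∈ range k, exp ε ^ i) = 1)
    {n : ℕ} (hkn : k ≤ n) (hn : n ≤ 2 * k + 1) :
    tsgdTail ε k n = 1 - δ * ∑ i ∈ range (2 * k + 1 - n), exp ε ^ i := by
  induction n, hkn using Nat.le_induction with
  | base =>
    rw [tsgdTail_of_le hε hnorm (by omega), ← hnorm, show 2 * k + 1 - k = k + 1 by omega]
    ring
  | succ n hkn ih =>
    rw [tsgdTail, sum_range_succ, ← tsgdTail, ih (by omega),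
      tsgdMass_sub_of_ge hε hnorm hkn (by omega), show 2 * k + 1 - n = 2 * k - n + 1 by omega,
      sum_range_succ, show 2 * k + 1 - (n + 1) = 2 * k - n by omega]
    ring

theorem tsgdTail_of_gt (hε : 0 < ε)
    (hnorm : δ * (∑ i ∈ range (k + 1), exp ε ^ i + ∑ i ∈ range k, exp ε ^ i) = 1)
    {n : ℕ} (hn : 2 * k + 1 ≤ n) : tsgdTail ε k n = 1 := by
  induction n, hn using Nat.le_induction with
  | base => simp [tsgdTail_of_ge hε hnorm (by omega) le_rfl]
  | succ n hn ih =>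
    rw [tsgdTail, sum_range_succ, ← tsgdTail, ih, tsgdMass_of_lt_natAbs (by omega), add_zero]

theorem tsgdTail_succ (hε : 0 < ε) (hδ : 0 < δ)
    (hnorm : δ * (∑ i ∈ range (k + 1), exp ε ^ i + ∑ i ∈ range k, exp ε ^ i) = 1) (n : ℕ) :
    tsgdTail ε k (n + 1) = thresholdStep (exp ε) δ (tsgdTail ε k n) := by
  have hE : 1 < exp ε := one_lt_exp_iff.2 hε
  have hswitch : (exp ε + 1) * (δ * ∑ i ∈ range k, exp ε ^ i) = 1 - δ := by
    rw [geom_sum_succ] at hnorm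
    linear_combination hnorm
  rcases le_or_gt n k with hnk | hkn
  · rw [tsgdTail_of_le hε hnorm (by omega), tsgdTail_of_le hε hnorm (by omega),
      thresholdStep_eq_left hE (by positivity) (by rw [← hswitch]; gcongr),
      geom_sum_succ]
    ring
  rcases le_or_gt n (2 * k) with hn | hn
  · obtain ⟨m, hm, hm'⟩ : ∃ m, 2 * k + 1 - n = m + 1 ∧ 2 * k + 1 - (n + 1) = m :=
      ⟨2 * k - n, by omega, by omega⟩
    have hlow : δ * ∑ i ∈ range (m + 1), exp ε ^ i ≤ δ * ∑ i ∈ range (k + 1), exp ε ^ i := by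
      gcongr; omega
    have hnonneg : 0 ≤ δ * (exp ε * ∑ i ∈ range m, exp ε ^ i) := by positivity
    rw [tsgdTail_of_ge hε hnorm (by omega) (by omega), tsgdTail_of_ge hε hnorm (by omega) (by omega),
      hm, hm', thresholdStep_eq_right hE (by nlinarith) (by rw [geom_sum_succ]; linarith),
      geom_sum_succ]
    field_simp
    ring
  · rw [tsgdTail_of_gt hε hnorm (by omega), tsgdTail_of_gt hε hnorm (by omega),
      thresholdStep_eq_one hE.le zero_le_one (by linarith)]

end tsgdTail

theorem noisy_thresholding_is_optimal_general
    (ε δ : ℝ) (hε : 0 < ε) (hδ0 : 0 < δ)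
    (k : ℕ)
    (hk : (k : ℝ) = (1 / ε) * Real.log ((exp ε + 2 * δ - 1) / ((exp ε + 1) * δ)))
    (π₀ : ℕ → ℝ) (h0 : π₀ 0 = 0)
    (hrec : ∀ n, π₀ (n + 1) =
      min (min (exp ε * π₀ n + δ) (1 - exp (-ε) * (1 - π₀ n - δ))) 1) :
    ∀ n : ℕ, π₀ n =
      ∑' x : {z : ℤ // (k : ℤ) + 1 ≤ (n : ℤ) + z}, tsgdMass ε k (x : ℤ) := by
  have hnorm := mul_geom_sum_add_geom_sum_eq_one_of_log hε hδ0 hk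
  intro n
  rw [tsum_tsgdMass_eq_tsgdTail]
  induction n with
  | zero => rw [h0, tsgdTail, sum_range_zero]
  | succ n ih =>
    rw [hrec, exp_neg, ← thresholdStep, ih, tsgdTail_succ hε hδ0 hnorm]

theorem noisy_thresholding_is_optimal
    (ε δ : ℝ) (hε : 0 < ε) (hδ0 : 0 < δ) (hδ1 : δ < 1)
    (k : ℕ) (hk1 : 1 ≤ k)
    (hk : (k : ℝ) = (1 / ε) * Real.log ((exp ε + 2 * δ - 1) / ((exp ε + 1) * δ)))
    (π₀ : ℕ → ℝ) (h0 : π₀ 0 = 0)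
    (hrec : ∀ n, π₀ (n + 1) =
      min (min (exp ε * π₀ n + δ) (1 - exp (-ε) * (1 - π₀ n - δ))) 1) :
    ∀ n : ℕ, π₀ n =
      ∑' x : {z : ℤ // (k : ℤ) + 1 ≤ (n : ℤ) + z}, tsgdMass ε k (x : ℤ) :=
  noisy_thresholding_is_optimal_general ε δ hε hδ0 k hk π₀ h0 hrec
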